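/- Fix 0<α<1. Let m:(0,∞)→[0,1] be measurable with Q_α(m(r)dr) < ∞. Then m has a generalized derivative: there exists a locally integrable g:(0,∞)→ℝ with ∫₀^∞ G'(r) m(r) dr = −∫₀^∞ G(r) g(r) dr for every G ∈ C¹_K((0,∞)), and Q_α(m(r)dr) = (1/8) ∫₀^∞ g(r)² / (m_α(r)(1−m_α(r))) dr, with the convention that the integrand vanishes where g = 0. -/

import Mathlib

open MeasureTheory Set Filter
open scoped ENNReal

noncomputable section

/-- `G` is continuously differentiable with compact support contained in `(0, ∞)`. -/
def IsC1K (G : ℝ → ℝ) : Prop :=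
  ContDiff ℝ 1 G ∧ HasCompactSupport G ∧ tsupport G ⊆ Set.Ioi 0

/-- The density `m_α`: equal to `m` on `(0,1/2)` and to `α` on `[1/2,∞)`. -/
def mAlpha (α : ℝ) (m : ℝ → ℝ) : ℝ → ℝ := fun r => if r < 1/2 then m r else α

/-- The expression inside the supremum defining the energy `Q_α`:
`-∫₀^∞ G'(r) m(r) dr - 2∫₀^∞ σ(m_α(r)) G(r)² dr` with `σ(a) = a(1-a)`. -/
def energyAlphaExpr (α : ℝ) (m G : ℝ → ℝ) : ℝ :=
  (- ∫ r in Set.Ioi (0:ℝ), deriv G r * m r)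
    - 2 * ∫ r in Set.Ioi (0:ℝ), (mAlpha α m r * (1 - mAlpha α m r)) * (G r) ^ 2

/-- The energy functional `Q_α(m(r)dr)`, with values in `ℝ≥0∞`. -/
def energyAlpha (α : ℝ) (m : ℝ → ℝ) : ℝ≥0∞ :=
  ⨆ G : {G : ℝ → ℝ // IsC1K G}, ENNReal.ofReal (energyAlphaExpr α m G.1)

/-!
Write `σ = m_α(1 - m_α)`, `L G = -∫₀^∞ G' m` and `‖·‖` for the norm of `L²(σ(r) dr)`. Then `Q_α` is
the supremum of `L G - 2‖G‖²` over test functions `G`. Replacing `G` by `tG` and optimising in `t`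
shows `(L G)² ≤ 8 Q_α ‖G‖²`, so `L` is a bounded functional of `G ∈ L²(σ dr)`; by Hahn–Banach and
Riesz it is `G ↦ 4⟪f, G⟫` for some `f` in the closure of the test functions. Then `g = 4σf` is the
weak derivative of `m`, and since `4⟪f, G⟫ - 2‖G‖² = 2‖f‖² - 2‖f - G‖²`, density gives
`Q_α = 2‖f‖² = (1/8)∫ g²/σ`.
-/

open scoped RealInnerProductSpace

section Hilbert

variable {E H : Type*} [AddCommGroup E] [Module ℝ E] [NormedAddCommGroup H] [InnerProductSpace ℝ H]

theorem sq_le_of_forall_mul_sub_sq_le {a b Q : ℝ} (h : ∀ t : ℝ, t * a - 2 * t ^ 2 * b ≤ Q) :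
    a ^ 2 ≤ 8 * b * Q := by
  have := discrim_le_zero (a := 2 * b) (b := -a) (c := Q) fun t => by nlinarith [h t]
  rw [discrim] at this
  linarith

theorem abs_le_of_forall_sub_norm_sq_le (T : E →ₗ[ℝ] H) (L : E →ₗ[ℝ] ℝ) {Q : ℝ}
    (hQ : ∀ x, L x - 2 * ‖T x‖ ^ 2 ≤ Q) (x : E) : |L x| ≤ √(8 * Q) * ‖T x‖ := by
  have hsq : L x ^ 2 ≤ 8 * ‖T x‖ ^ 2 * Q := sq_le_of_forall_mul_sub_sq_le fun t => by
    simpa [norm_smul, mul_pow, sq_abs, mul_assoc] using hQ (t • x)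
  have hQ0 : 0 ≤ Q := by simpa using hQ 0
  calc |L x| ≤ √(8 * ‖T x‖ ^ 2 * Q) := Real.abs_le_sqrt hsq
    _ = √(8 * Q) * ‖T x‖ := by
      rw [show 8 * ‖T x‖ ^ 2 * Q = 8 * Q * ‖T x‖ ^ 2 by ring, Real.sqrt_mul (by positivity),
        Real.sqrt_sq (norm_nonneg _)]

theorem exists_mem_topologicalClosure_inner_eq [CompleteSpace H] (T : E →ₗ[ℝ] H)
    (L : E →ₗ[ℝ] ℝ) {C : ℝ} (hC : ∀ x, |L x| ≤ C * ‖T x‖) :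
    ∃ f ∈ (LinearMap.range T).topologicalClosure, ∀ x, L x = ⟪f, T x⟫ := by
  -- `L` factors through `range T`; extend it by Hahn–Banach, represent it by Riesz, and project
  -- the representative onto the closure of `range T`.
  have hker : LinearMap.ker T ≤ LinearMap.ker L := fun x hx => by
    simpa [LinearMap.mem_ker.1 hx] using hC x
  set ℓ : LinearMap.range T →ₗ[ℝ] ℝ := (LinearMap.ker T).liftQ L hker ∘ₗ T.quotKerEquivRange.symm
  have hℓ : ∀ x, ℓ ⟨T x, LinearMap.mem_range_self T x⟩ = L x := fun x => by
    simp [ℓ, LinearMap.quotKerEquivRange_symm_apply_image]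
  obtain ⟨φ, hφ, -⟩ := exists_extension_norm_eq _ (ℓ.mkContinuous C fun y => by
    obtain ⟨x, hx⟩ := y.2
    obtain rfl : y = ⟨T x, LinearMap.mem_range_self T x⟩ := Subtype.ext hx.symm
    simpa [hℓ] using hC x)
  set K := (LinearMap.range T).topologicalClosure
  refine ⟨K.starProjection ((InnerProductSpace.toDual ℝ H).symm φ), K.starProjection_apply_mem _,
    fun x => ?_⟩
  have hTx : T x ∈ K := (LinearMap.range T).le_topologicalClosure (LinearMap.mem_range_self T x)
  rw [Submodule.inner_starProjection_left_eq_right, Submodule.starProjection_eq_self_iff.2 hTx,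
    InnerProductSpace.toDual_symm_apply, hφ ⟨T x, LinearMap.mem_range_self T x⟩]
  simp [hℓ]

theorem isLUB_four_inner_sub_two_norm_sq (T : E →ₗ[ℝ] H) {p : H}
    (hp : p ∈ (LinearMap.range T).topologicalClosure) :
    IsLUB (range fun x => 4 * ⟪p, T x⟫ - 2 * ‖T x‖ ^ 2) (2 * ‖p‖ ^ 2) := by
  have key : ∀ x, 4 * ⟪p, T x⟫ - 2 * ‖T x‖ ^ 2 = 2 * ‖p‖ ^ 2 - 2 * ‖p - T x‖ ^ 2 := fun x => by
    rw [norm_sub_sq_real]; ring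
  simp_rw [key]
  refine ⟨?_, fun b hb => le_of_forall_pos_lt_add fun ε hε => ?_⟩
  · rintro _ ⟨x, rfl⟩
    linarith [sq_nonneg ‖p - T x‖]
  · rw [← SetLike.mem_coe, Submodule.topologicalClosure_coe, Metric.mem_closure_iff] at hp
    obtain ⟨_, ⟨x, rfl⟩, hx⟩ := hp √(ε / 2) (by positivity)
    have hx2 : ‖p - T x‖ ^ 2 < ε / 2 := by
      rw [← dist_eq_norm]; exact (Real.lt_sqrt dist_nonneg).1 hx
    linarith [hb ⟨x, rfl⟩]

theorem exists_inner_eq_and_isLUB_of_bddAbove [CompleteSpace H] (T : E →ₗ[ℝ] H) (L : E →ₗ[ℝ] ℝ)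
    (hbdd : BddAbove (range fun x => L x - 2 * ‖T x‖ ^ 2)) :
    ∃ f : H, (∀ x, L x = 4 * ⟪f, T x⟫) ∧
      IsLUB (range fun x => L x - 2 * ‖T x‖ ^ 2) (2 * ‖f‖ ^ 2) := by
  obtain ⟨Q, hQ⟩ := hbdd
  obtain ⟨p, hp, hpL⟩ := exists_mem_topologicalClosure_inner_eq T L
    (abs_le_of_forall_sub_norm_sq_le T L fun x => hQ ⟨x, rfl⟩)
  have hL : ∀ x, L x = 4 * ⟪(4⁻¹ : ℝ) • p, T x⟫ := fun x => by
    rw [real_inner_smul_left, hpL]; ring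
  refine ⟨(4⁻¹ : ℝ) • p, hL, ?_⟩
  simp_rw [hL]
  exact isLUB_four_inner_sub_two_norm_sq T (Submodule.smul_mem _ _ hp)

end Hilbert

theorem iSup_ofReal_eq_of_isLUB {ι : Sort*} {f : ι → ℝ} {a : ℝ}
    (h : IsLUB (range f) a) : ⨆ i, ENNReal.ofReal (f i) = ENNReal.ofReal a := by
  have : Nonempty ι := not_isEmpty_iff.1 fun _ =>
    not_isBot a (isLUB_empty_iff.1 (by rwa [range_eq_empty] at h))
  rw [← h.ciSup_eq, Monotone.map_ciSup_of_continuousAt ENNReal.continuous_ofReal.continuousAt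
    ENNReal.ofReal_mono ⟨a, h.1⟩]

theorem sq_mul_mul_div_self (c w x : ℝ) : (c * (w * x)) ^ 2 / w = c ^ 2 * (w * x ^ 2) := by
  rw [show (c * (w * x)) ^ 2 = c ^ 2 * x ^ 2 * (w * w) by ring, mul_div_assoc, mul_self_div_self]
  ring

theorem locallyIntegrableOn_of_norm_le {X E : Type*} [MeasurableSpace X] [TopologicalSpace X]
    [OpensMeasurableSpace X] [LocallyCompactSpace X] [T2Space X] [NormedAddCommGroup E]
    {μ : Measure X} [IsFiniteMeasureOnCompacts μ] {f : X → E} (hf : AEStronglyMeasurable f μ)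
    {s : Set X} (hs : IsLocallyClosed s) {C : ℝ} (hC : ∀ x ∈ s, ‖f x‖ ≤ C) :
    LocallyIntegrableOn f s μ := by
  rw [locallyIntegrableOn_iff hs]
  exact fun K hK hKc => Measure.integrableOn_of_bounded hKc.measure_lt_top.ne hf <|
    (ae_restrict_iff' hKc.measurableSet).2 <| .of_forall fun x hx => hC x (hK hx)

def c1KSubmodule : Submodule ℝ (ℝ → ℝ) where
  carrier := {G | IsC1K G}
  zero_mem' := ⟨contDiff_const, HasCompactSupport.zero, by simp⟩
  add_mem' := fun ⟨hF, hFc, hFs⟩ ⟨hG, hGc, hGs⟩ =>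
    ⟨hF.add hG, hFc.add hGc, (tsupport_add _ _).trans (union_subset hFs hGs)⟩
  smul_mem' c G := fun ⟨hG, hGc, hGs⟩ =>
    ⟨hG.const_smul c, hGc.smul_left, (tsupport_smul_subset_right (fun _ => c) G).trans hGs⟩

theorem integrableOn_deriv_mul {m : ℝ → ℝ} (hm : LocallyIntegrableOn m (Ioi 0)) {G : ℝ → ℝ}
    (hG : IsC1K G) : IntegrableOn (fun r => deriv G r * m r) (Ioi 0) := by
  obtain ⟨hG, hGc, hGs⟩ := hG
  refine IntegrableOn.of_forall_sdiff_eq_zero (s := tsupport G) ?_ measurableSet_Ioi fun r hr => ?_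
  · exact (hm.integrableOn_compact_subset hGs hGc).continuousOn_mul
      hG.continuous_deriv_one.continuousOn hGc
  · rw [image_eq_zero_of_notMem_tsupport fun h => hr.2 (tsupport_deriv_subset h), zero_mul]

def derivPairing {m : ℝ → ℝ} (hm : LocallyIntegrableOn m (Ioi 0)) : c1KSubmodule →ₗ[ℝ] ℝ where
  toFun G := -∫ r in Ioi 0, deriv G r * m r
  map_add' F G := by
    have hd : ∀ G : c1KSubmodule, Differentiable ℝ (G : ℝ → ℝ) := fun G =>
      G.2.1.differentiable one_ne_zero
    simp only [Submodule.coe_add, deriv_add (hd F _) (hd G _), add_mul]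
    rw [integral_add (integrableOn_deriv_mul hm F.2) (integrableOn_deriv_mul hm G.2), neg_add]
  map_smul' c G := by
    simp [deriv_const_smul_field, integral_const_mul, mul_assoc]

def weightedVolume (w : ℝ → ℝ) : Measure ℝ :=
  (volume.restrict (Ioi 0)).withDensity fun r => ENNReal.ofReal (w r)

section Weighted

variable {w : ℝ → ℝ}

theorem weightedVolume_le (hw : ∀ r ∈ Ioi (0 : ℝ), w r ≤ 1) :
    weightedVolume w ≤ volume.restrict (Ioi 0) := by
  calc weightedVolume w ≤ (volume.restrict (Ioi 0)).withDensity 1 :=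
        withDensity_mono <| (ae_restrict_iff' measurableSet_Ioi).2 <|
          .of_forall fun r hr => ENNReal.ofReal_le_one.2 (hw r hr)
    _ = volume.restrict (Ioi 0) := withDensity_one

theorem integral_weightedVolume (hw : Measurable w) (hw0 : ∀ r ∈ Ioi (0 : ℝ), 0 ≤ w r)
    (h : ℝ → ℝ) : ∫ r, h r ∂weightedVolume w = ∫ r in Ioi 0, w r * h r := by
  rw [weightedVolume, integral_withDensity_eq_integral_toReal_smul hw.ennreal_ofReal
    (.of_forall fun _ => ENNReal.ofReal_lt_top)]
  refine setIntegral_congr_fun measurableSet_Ioi fun r hr => ?_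
  simp [ENNReal.toReal_ofReal (hw0 r hr)]

theorem integrable_weightedVolume_iff (hw : Measurable w) (hw0 : ∀ r ∈ Ioi (0 : ℝ), 0 ≤ w r)
    {h : ℝ → ℝ} : Integrable h (weightedVolume w) ↔ IntegrableOn (fun r => w r * h r) (Ioi 0) := by
  rw [weightedVolume, integrable_withDensity_iff hw.ennreal_ofReal
    (.of_forall fun _ => ENNReal.ofReal_lt_top)]
  refine integrable_congr <| (ae_restrict_iff' measurableSet_Ioi).2 <| .of_forall fun r hr => ?_
  simp [ENNReal.toReal_ofReal (hw0 r hr), mul_comm]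

theorem memLp_weightedVolume (hw : ∀ r ∈ Ioi (0 : ℝ), w r ≤ 1) {p : ℝ≥0∞} {G : ℝ → ℝ}
    (hG : Continuous G) (hGc : HasCompactSupport G) : MemLp G p (weightedVolume w) :=
  (hG.memLp_of_hasCompactSupport hGc).mono_measure (weightedVolume_le hw)

def c1KToLp (hw : ∀ r ∈ Ioi (0 : ℝ), w r ≤ 1) : c1KSubmodule →ₗ[ℝ] Lp ℝ 2 (weightedVolume w) where
  toFun G := (memLp_weightedVolume hw G.2.1.continuous G.2.2.1).toLp G
  map_add' _ _ := MemLp.toLp_add _ _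
  map_smul' _ _ := MemLp.toLp_const_smul _ _

theorem inner_c1KToLp (hw : Measurable w) (hw0 : ∀ r ∈ Ioi (0 : ℝ), 0 ≤ w r)
    (hw1 : ∀ r ∈ Ioi (0 : ℝ), w r ≤ 1) (f : Lp ℝ 2 (weightedVolume w)) (G : c1KSubmodule) :
    ⟪f, c1KToLp hw1 G⟫ = ∫ r in Ioi 0, w r * (f r * (G : ℝ → ℝ) r) := by
  rw [L2.inner_def, ← integral_weightedVolume hw hw0]
  refine integral_congr_ae ?_
  filter_upwards [MemLp.coeFn_toLp (memLp_weightedVolume hw1 G.2.1.continuous G.2.2.1)] with r hr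
  simp only [c1KToLp, LinearMap.coe_mk, AddHom.coe_mk]
  rw [Real.inner_apply, hr, mul_comm]

theorem norm_c1KToLp_sq (hw : Measurable w) (hw0 : ∀ r ∈ Ioi (0 : ℝ), 0 ≤ w r)
    (hw1 : ∀ r ∈ Ioi (0 : ℝ), w r ≤ 1) (G : c1KSubmodule) :
    ‖c1KToLp hw1 G‖ ^ 2 = ∫ r in Ioi 0, w r * (G : ℝ → ℝ) r ^ 2 := by
  rw [← real_inner_self_eq_norm_sq, L2.inner_def, ← integral_weightedVolume hw hw0]
  refine integral_congr_ae ?_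
  filter_upwards [MemLp.coeFn_toLp (memLp_weightedVolume hw1 G.2.1.continuous G.2.2.1)] with r hr
  simp only [c1KToLp, LinearMap.coe_mk, AddHom.coe_mk]
  rw [Real.inner_apply, hr, sq]

theorem norm_sq_eq_integral_weightedVolume (hw : Measurable w) (hw0 : ∀ r ∈ Ioi (0 : ℝ), 0 ≤ w r)
    (f : Lp ℝ 2 (weightedVolume w)) : ‖f‖ ^ 2 = ∫ r in Ioi 0, w r * f r ^ 2 := by
  rw [← real_inner_self_eq_norm_sq, L2.inner_def, ← integral_weightedVolume hw hw0]
  simp [sq]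

theorem integrableOn_mul_sq (hw : Measurable w) (hw0 : ∀ r ∈ Ioi (0 : ℝ), 0 ≤ w r)
    (f : Lp ℝ 2 (weightedVolume w)) : IntegrableOn (fun r => w r * f r ^ 2) (Ioi 0) :=
  (integrable_weightedVolume_iff hw hw0).1 (Lp.memLp f).integrable_sq

theorem locallyIntegrableOn_mul (hw : Measurable w) (hw0 : ∀ r ∈ Ioi (0 : ℝ), 0 ≤ w r)
    (hw1 : ∀ r ∈ Ioi (0 : ℝ), w r ≤ 1) (f : Lp ℝ 2 (weightedVolume w)) :
    LocallyIntegrableOn (fun r => w r * f r) (Ioi 0) := by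
  rw [locallyIntegrableOn_iff isOpen_Ioi.isLocallyClosed]
  intro K hK hKc
  have hwK : IntegrableOn w K := (locallyIntegrableOn_of_norm_le hw.aestronglyMeasurable
    isOpen_Ioi.isLocallyClosed fun r hr => (Real.norm_of_nonneg (hw0 r hr)).trans_le (hw1 r hr)
    ).integrableOn_compact_subset hK hKc
  -- `|w f| ≤ w + w f²` since `|f| ≤ 1 + f²`
  refine (hwK.add ((integrableOn_mul_sq hw hw0 f).mono_set hK)).mono'
    (hw.aestronglyMeasurable.mul (Lp.stronglyMeasurable f).aestronglyMeasurable) <|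
    (ae_restrict_iff' hKc.measurableSet).2 <| .of_forall fun r hr => ?_
  have := hw0 r (hK hr)
  rw [norm_mul, Real.norm_of_nonneg this, Real.norm_eq_abs, Pi.add_apply, ← sq_abs (f r)]
  nlinarith [mul_nonneg this (sq_nonneg (|f r| - 1)), abs_nonneg (f r)]

theorem integral_deriv_mul_eq_neg_integral {m : ℝ → ℝ} (hm : LocallyIntegrableOn m (Ioi 0))
    (hw : Measurable w) (hw0 : ∀ r ∈ Ioi (0 : ℝ), 0 ≤ w r) (hw1 : ∀ r ∈ Ioi (0 : ℝ), w r ≤ 1)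
    {f : Lp ℝ 2 (weightedVolume w)} (hf : ∀ G, derivPairing hm G = 4 * ⟪f, c1KToLp hw1 G⟫)
    {G : ℝ → ℝ} (hG : IsC1K G) :
    ∫ r in Ioi 0, deriv G r * m r = -∫ r in Ioi 0, G r * (4 * (w r * f r)) := by
  have hGf : -∫ r in Ioi 0, deriv G r * m r = 4 * ∫ r in Ioi 0, w r * (f r * G r) :=
    (hf ⟨G, hG⟩).trans (by rw [inner_c1KToLp hw hw0 hw1])
  have hfG : ∫ r in Ioi 0, G r * (4 * (w r * f r)) = 4 * ∫ r in Ioi 0, w r * (f r * G r) := by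
    rw [← integral_const_mul]; congr 1; ext r; ring
  linarith

end Weighted

def sigmaAlpha (α : ℝ) (m : ℝ → ℝ) (r : ℝ) : ℝ := mAlpha α m r * (1 - mAlpha α m r)

section Energy

variable {α : ℝ} {m : ℝ → ℝ}

theorem measurable_sigmaAlpha (hm : Measurable m) : Measurable (sigmaAlpha α m) :=
  have hmα : Measurable (mAlpha α m) := hm.ite measurableSet_Iio measurable_const
  hmα.mul (measurable_const.sub hmα)

theorem sigmaAlpha_mem_Icc (hα0 : 0 < α) (hα1 : α < 1)
    (hm01 : ∀ r ∈ Ioi (0 : ℝ), m r ∈ Icc 0 1) (r : ℝ) (hr : r ∈ Ioi 0) :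
    sigmaAlpha α m r ∈ Icc 0 1 := by
  have hmα : mAlpha α m r ∈ Icc 0 1 := by
    unfold mAlpha; split_ifs
    exacts [hm01 r hr, ⟨hα0.le, hα1.le⟩]
  exact unitInterval.mul_mem hmα (Icc.mem_iff_one_sub_mem.1 hmα)

theorem energyAlphaExpr_eq_sub (hm : LocallyIntegrableOn m (Ioi 0))
    (hσ : Measurable (sigmaAlpha α m)) (hσ0 : ∀ r ∈ Ioi (0 : ℝ), 0 ≤ sigmaAlpha α m r)
    (hσ1 : ∀ r ∈ Ioi (0 : ℝ), sigmaAlpha α m r ≤ 1) (G : c1KSubmodule) :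
    energyAlphaExpr α m G = derivPairing hm G - 2 * ‖c1KToLp hσ1 G‖ ^ 2 := by
  rw [norm_c1KToLp_sq hσ hσ0 hσ1]
  rfl

theorem bddAbove_energyAlphaExpr (hQ : energyAlpha α m ≠ ⊤) :
    BddAbove (range fun G : c1KSubmodule => energyAlphaExpr α m G) := by
  refine ⟨(energyAlpha α m).toReal, ?_⟩
  rintro _ ⟨G, rfl⟩
  rw [← ENNReal.ofReal_le_iff_le_toReal hQ]
  exact le_iSup (fun G : {G // IsC1K G} => ENNReal.ofReal (energyAlphaExpr α m G.1)) ⟨G, G.2⟩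

theorem energyAlpha_eq_of_isLUB {a : ℝ}
    (h : IsLUB (range fun G : c1KSubmodule => energyAlphaExpr α m G) a) :
    energyAlpha α m = ENNReal.ofReal a :=
  iSup_ofReal_eq_of_isLUB (f := fun G : {G // IsC1K G} => energyAlphaExpr α m G.1) h

end Energy

theorem stmt2 (α : ℝ) (hα0 : 0 < α) (hα1 : α < 1)
    (m : ℝ → ℝ) (hmeas : Measurable m)
    (hm01 : ∀ r ∈ Set.Ioi (0:ℝ), m r ∈ Set.Icc (0:ℝ) 1)
    (hQ : energyAlpha α m ≠ ⊤) :
    ∃ g : ℝ → ℝ, LocallyIntegrableOn g (Set.Ioi 0) ∧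
      (∀ G : ℝ → ℝ, IsC1K G →
        ∫ r in Set.Ioi (0:ℝ), deriv G r * m r
          = - ∫ r in Set.Ioi (0:ℝ), G r * g r) ∧
      IntegrableOn
        (fun r => (g r) ^ 2 / (mAlpha α m r * (1 - mAlpha α m r))) (Set.Ioi 0) ∧
      energyAlpha α m
        = ENNReal.ofReal
            ((1/8) * ∫ r in Set.Ioi (0:ℝ),
              (g r) ^ 2 / (mAlpha α m r * (1 - mAlpha α m r))) := by
  have hσ := measurable_sigmaAlpha (α := α) hmeas
  have hσ0 := fun r hr => (sigmaAlpha_mem_Icc hα0 hα1 hm01 r hr).1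
  have hσ1 := fun r hr => (sigmaAlpha_mem_Icc hα0 hα1 hm01 r hr).2
  have hm : LocallyIntegrableOn m (Ioi 0) :=
    locallyIntegrableOn_of_norm_le hmeas.aestronglyMeasurable isOpen_Ioi.isLocallyClosed
      fun r hr => abs_le.2 ⟨by linarith [(hm01 r hr).1], (hm01 r hr).2⟩
  have hexpr := energyAlphaExpr_eq_sub hm hσ hσ0 hσ1
  obtain ⟨f, hfL, hfQ⟩ := exists_inner_eq_and_isLUB_of_bddAbove (c1KToLp hσ1) (derivPairing hm)
    (by simpa only [hexpr] using bddAbove_energyAlphaExpr hQ)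
  refine ⟨fun r => 4 * (sigmaAlpha α m r * f r),
    (locallyIntegrableOn_mul hσ hσ0 hσ1 f).smul (4 : ℝ),
    fun G hG => integral_deriv_mul_eq_neg_integral hm hσ hσ0 hσ1 hfL hG, ?_, ?_⟩
  all_goals simp only [← sigmaAlpha.eq_1, sq_mul_mul_div_self]
  · exact (integrableOn_mul_sq hσ hσ0 f).const_mul _
  · rw [integral_const_mul, ← norm_sq_eq_integral_weightedVolume hσ hσ0 f,
      energyAlpha_eq_of_isLUB (by simpa only [← hexpr] using hfQ)]
    ring_nf
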